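/- arXiv:1711.00757 — 4 statements merged into one kernel-verified Lean document; each statement's English description precedes it below -/
import Mathlib

section
/- Let k ≥ 1, λ_i > 0, θ_i > 0, B > 0. The minimum of ∑_{i=1}^k λ_i/ε_i² over ε_i > 0, p_i ∈ ℝ subject to ∑ λ_i p_i ≤ B and p_i − θ_i ε_i ≥ 0 is attained at ε_i* = (B/∑_j λ_j θ_j^{2/3})·θ_i^{−1/3} and p_i* = θ_i ε_i*. -/
/-!
The objective `∑ λᵢ/εᵢ²` is convex and the constraints are linear in `θᵢεᵢ` once the
individual rationality constraints `pᵢ ≥ θᵢεᵢ` are substituted into the budget. Summing the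
tangent-line bounds `1/x² ≥ 3/c² - 2x/c³` of the convex function `1/x²` shows that any point
where the marginal cost `θᵢεᵢ³` is the same for every `i` and the budget is exhausted is a
minimiser; the candidate `εᵢ* ∝ θᵢ^(-1/3)` is exactly such a point.
-/

open Finset

lemma inv_sq_tangent_le {c x : ℝ} (hc : 0 < c) (hx : 0 < x) :
    3 / c ^ 2 - 2 * x / c ^ 3 ≤ 1 / x ^ 2 := by
  have hlhs : 3 / c ^ 2 - 2 * x / c ^ 3 = (3 * c - 2 * x) / c ^ 3 := by field_simp
  rw [hlhs, div_le_div_iff₀ (by positivity) (by positivity)]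
  nlinarith [mul_nonneg (sq_nonneg (c - x)) (by linarith : (0 : ℝ) ≤ c + 2 * x)]

theorem sum_div_sq_le_of_balanced {ι : Type*} [Fintype ι] {lam θ ε εs : ι → ℝ} {c : ℝ}
    (hc : 0 < c) (hlam : ∀ i, 0 ≤ lam i) (hεs : ∀ i, 0 < εs i) (hε : ∀ i, 0 < ε i)
    (hbal : ∀ i, θ i * εs i ^ 3 = c)
    (hbud : ∑ i, lam i * (θ i * ε i) ≤ ∑ i, lam i * (θ i * εs i)) :
    ∑ i, lam i / εs i ^ 2 ≤ ∑ i, lam i / ε i ^ 2 := by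
  have hcost : ∀ i, lam i * (θ i * εs i) = c * (lam i / εs i ^ 2) := fun i => by
    have hεs_ne := (hεs i).ne'
    rw [← hbal i]; field_simp
  have hterm : ∀ i, 3 * (lam i / εs i ^ 2) - 2 * (lam i * (θ i * ε i)) / c ≤ lam i / ε i ^ 2 :=
    fun i => by
      have htan := mul_le_mul_of_nonneg_left (inv_sq_tangent_le (hεs i) (hε i)) (hlam i)
      have hshift : 2 * (lam i * (θ i * ε i)) / c = lam i * (2 * ε i / εs i ^ 3) := by
        rw [mul_div_assoc', div_eq_div_iff hc.ne' (pow_pos (hεs i) 3).ne']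
        linear_combination (2 * lam i * ε i) * hbal i
      calc 3 * (lam i / εs i ^ 2) - 2 * (lam i * (θ i * ε i)) / c
          = lam i * (3 / εs i ^ 2 - 2 * ε i / εs i ^ 3) := by rw [hshift]; ring
        _ ≤ lam i * (1 / ε i ^ 2) := htan
        _ = lam i / ε i ^ 2 := mul_one_div _ _
  have hcost_sum : ∑ i, lam i * (θ i * εs i) = c * ∑ i, lam i / εs i ^ 2 := by
    rw [mul_sum]; exact sum_congr rfl fun i _ => hcost i
  calc ∑ i, lam i / εs i ^ 2
      = 3 * ∑ i, lam i / εs i ^ 2 - 2 * (∑ i, lam i * (θ i * εs i)) / c := by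
        rw [hcost_sum]; field_simp; ring
    _ ≤ 3 * ∑ i, lam i / εs i ^ 2 - 2 * (∑ i, lam i * (θ i * ε i)) / c := by
        gcongr
    _ = ∑ i, (3 * (lam i / εs i ^ 2) - 2 * (lam i * (θ i * ε i)) / c) := by
        rw [sum_sub_distrib, ← mul_sum, ← sum_div, ← mul_sum]
    _ ≤ ∑ i, lam i / ε i ^ 2 := sum_le_sum fun i _ => hterm i

lemma mul_rpow_neg_one_third {x : ℝ} (hx : 0 < x) :
    x * x ^ (-(1 : ℝ) / 3) = x ^ ((2 : ℝ) / 3) := by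
  rw [show (2 : ℝ) / 3 = 1 + -(1 : ℝ) / 3 by norm_num, Real.rpow_add hx, Real.rpow_one]

lemma mul_rpow_neg_one_third_pow_three {x : ℝ} (hx : 0 < x) :
    x * (x ^ (-(1 : ℝ) / 3)) ^ 3 = 1 := by
  rw [← Real.rpow_natCast, ← Real.rpow_mul hx.le]
  norm_num [Real.rpow_neg_one, hx.ne']

theorem complete_info_optimal_contract_general
    (k : ℕ) (lam θ : Fin k → ℝ)
    (hlam : ∀ i, 0 < lam i) (hθ : ∀ i, 0 < θ i) (B : ℝ) (hB : 0 < B) :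
    let εstar : Fin k → ℝ := fun i =>
      (B / ∑ j, lam j * (θ j) ^ ((2 : ℝ) / 3)) * (θ i) ^ (-(1 : ℝ) / 3)
    let pstar : Fin k → ℝ := fun i => θ i * εstar i
    ((∀ i, 0 < εstar i) ∧ (∑ i, lam i * pstar i ≤ B) ∧
      (∀ i, 0 ≤ pstar i - θ i * εstar i)) ∧
    ∀ ε p : Fin k → ℝ, (∀ i, 0 < ε i) → (∑ i, lam i * p i ≤ B) →
      (∀ i, 0 ≤ p i - θ i * ε i) →
      ∑ i, lam i / (εstar i) ^ 2 ≤ ∑ i, lam i / (ε i) ^ 2 := by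
  intro εstar pstar
  rcases isEmpty_or_nonempty (Fin k) with hk | hk
  · simp [hB.le]
  set S := ∑ j, lam j * θ j ^ ((2 : ℝ) / 3)
  have hS : 0 < S :=
    sum_pos (fun i _ => mul_pos (hlam i) (Real.rpow_pos_of_pos (hθ i) _)) univ_nonempty
  have hεstar : ∀ i, εstar i = B / S * θ i ^ (-(1 : ℝ) / 3) := fun i => rfl
  have hpos : ∀ i, 0 < εstar i := fun i =>
    hεstar i ▸ mul_pos (div_pos hB hS) (Real.rpow_pos_of_pos (hθ i) _)
  have hbal : ∀ i, θ i * εstar i ^ 3 = (B / S) ^ 3 := fun i => by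
    rw [hεstar, mul_pow, mul_left_comm, mul_rpow_neg_one_third_pow_three (hθ i), mul_one]
  have hbudget : ∑ i, lam i * pstar i = B := by
    simp only [pstar, hεstar, mul_left_comm (θ _), mul_rpow_neg_one_third (hθ _),
      mul_left_comm (lam _)]
    rw [← mul_sum, div_mul_cancel₀ B hS.ne']
  refine ⟨⟨hpos, hbudget.le, fun i => by simp [pstar]⟩, fun ε p hε hbud hIR => ?_⟩
  refine sum_div_sq_le_of_balanced (pow_pos (div_pos hB hS) 3) (fun i => (hlam i).le) hpos hε
    hbal ?_
  calc ∑ i, lam i * (θ i * ε i) ≤ ∑ i, lam i * p i :=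
        sum_le_sum fun i _ => mul_le_mul_of_nonneg_left (by linarith [hIR i]) (hlam i).le
    _ ≤ B := hbud
    _ = ∑ i, lam i * pstar i := hbudget.symm

/-- Complete-information optimal contract (Theorem 4.2): the minimum of
    ∑ λ_i/ε_i² under budget ∑ λ_i p_i ≤ B and IR p_i ≥ θ_i ε_i is attained at
    ε_i* = (B/∑_j λ_j θ_j^{2/3})·θ_i^{−1/3}, p_i* = θ_i ε_i*. -/
theorem complete_info_optimal_contract
    (k : ℕ) (hk : 1 ≤ k) (lam θ : Fin k → ℝ)
    (hlam : ∀ i, 0 < lam i) (hθ : ∀ i, 0 < θ i) (B : ℝ) (hB : 0 < B) :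
    let εstar : Fin k → ℝ := fun i =>
      (B / ∑ j, lam j * (θ j) ^ ((2 : ℝ) / 3)) * (θ i) ^ (-(1 : ℝ) / 3)
    let pstar : Fin k → ℝ := fun i => θ i * εstar i
    ((∀ i, 0 < εstar i) ∧ (∑ i, lam i * pstar i ≤ B) ∧
      (∀ i, 0 ≤ pstar i - θ i * εstar i)) ∧
    ∀ ε p : Fin k → ℝ, (∀ i, 0 < ε i) → (∑ i, lam i * p i ≤ B) →
      (∀ i, 0 ≤ p i - θ i * ε i) →
      ∑ i, lam i / (εstar i) ^ 2 ≤ ∑ i, lam i / (ε i) ^ 2 :=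
  complete_info_optimal_contract_general k lam θ hlam hθ B hB
end

section
/- Let ε: [θ̲, θ̄] → ℝ be non-increasing and p: [θ̲, θ̄] → ℝ differentiable with p'(θ) = θ·ε'(θ) for all θ (ε differentiable). Then for all θ, θ̂ ∈ [θ̲, θ̄]: p(θ) − θ·ε(θ) ≥ p(θ̂) − θ·ε(θ̂). -/
open Set

/-! The gain from reporting `u` instead of the truth `θ`, `u ↦ p u - θ * ε u`, has derivative
`(u - θ) * ε' u` by the first-order condition. Since `ε` is non-increasing, `ε' ≤ 0`, so this
gain rises up to `u = θ` and falls after it: truthful reporting is a global maximum. -/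

theorem AntitoneOn.deriv_nonpos_of_mem_nhds {f : ℝ → ℝ} {s : Set ℝ} {x : ℝ}
    (hf : AntitoneOn f s) (hs : s ∈ nhds x) : deriv f x ≤ 0 := by
  rw [← derivWithin_of_mem_nhds hs]
  exact hf.derivWithin_nonpos

theorem isMaxOn_Icc_of_deriv_eq_sub_mul {g h : ℝ → ℝ} {a b θ : ℝ} (hg : Differentiable ℝ g)
    (hθ : θ ∈ Icc a b) (hderiv : ∀ u ∈ Ioo a b, deriv g u = (u - θ) * h u)
    (hh : ∀ u ∈ Ioo a b, h u ≤ 0) : IsMaxOn g (Icc a b) θ := by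
  refine isMaxOn_Icc_of_deriv (hg a).continuousAt (hg θ).continuousAt (hg b).continuousAt
    hg.differentiableOn hg.differentiableOn (fun u hu => ?_) (fun u hu => ?_)
  · have hu' : u ∈ Ioo a b := ⟨hu.1, hu.2.trans_le hθ.2⟩
    rw [hderiv u hu']
    exact mul_nonneg_of_nonpos_of_nonpos (by linarith [hu.2]) (hh u hu')
  · have hu' : u ∈ Ioo a b := ⟨hθ.1.trans_lt hu.1, hu.2⟩
    rw [hderiv u hu']
    exact mul_nonpos_of_nonneg_of_nonpos (by linarith [hu.1]) (hh u hu')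

theorem continuous_IC_sufficiency_general
    (a b : ℝ) (ε p : ℝ → ℝ)
    (hεdiff : Differentiable ℝ ε) (hpdiff : Differentiable ℝ p)
    (hεmono : AntitoneOn ε (Set.Icc a b))
    (hfo : ∀ θ ∈ Set.Icc a b, deriv p θ = θ * deriv ε θ) :
    ∀ θ ∈ Set.Icc a b, ∀ θ' ∈ Set.Icc a b,
      p θ' - θ * ε θ' ≤ p θ - θ * ε θ := by
  intro θ hθ θ' hθ'
  have hgain : ∀ u ∈ Ioo a b, deriv (fun v => p v - θ * ε v) u = (u - θ) * deriv ε u := by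
    intro u hu
    rw [((hpdiff u).hasDerivAt.fun_sub ((hεdiff u).hasDerivAt.const_mul θ)).deriv,
      hfo u (Ioo_subset_Icc_self hu)]
    ring
  have hε' : ∀ u ∈ Ioo a b, deriv ε u ≤ 0 := fun u hu =>
    hεmono.deriv_nonpos_of_mem_nhds (Icc_mem_nhds hu.1 hu.2)
  exact isMaxOn_Icc_of_deriv_eq_sub_mul (g := fun v => p v - θ * ε v)
    (hpdiff.sub (hεdiff.const_mul θ)) hθ hgain hε' hθ'

/-- Continuous-type IC sufficiency: if ε is non-increasing on [θ̲, θ̄] and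
    p' (θ) = θ·ε'(θ) there, then global incentive compatibility holds:
    p(θ) − θ·ε(θ) ≥ p(θ̂) − θ·ε(θ̂) for all θ, θ̂ in the interval. -/
theorem continuous_IC_sufficiency
    (a b : ℝ) (hab : a ≤ b) (ε p : ℝ → ℝ)
    (hεdiff : Differentiable ℝ ε) (hpdiff : Differentiable ℝ p)
    (hεmono : AntitoneOn ε (Set.Icc a b))
    (hfo : ∀ θ ∈ Set.Icc a b, deriv p θ = θ * deriv ε θ) :
    ∀ θ ∈ Set.Icc a b, ∀ θ' ∈ Set.Icc a b,
      p θ' - θ * ε θ' ≤ p θ - θ * ε θ :=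
  continuous_IC_sufficiency_general a b ε p hεdiff hpdiff hεmono hfo
end

section
/- If the global continuous-type IC holds, i.e., p(θ) − θε(θ) ≥ p(θ̂) − θε(θ̂) for all θ, θ̂ ∈ [θ̲, θ̄], with ε and p differentiable, then ε is non-increasing and p'(θ) = θ·ε'(θ) for all interior θ. -/
open Set

theorem sub_mul_sub_nonneg_of_incentiveCompatible {p ε : ℝ → ℝ} {θ θ' : ℝ}
    (h : p θ' - θ * ε θ' ≤ p θ - θ * ε θ) (h' : p θ - θ' * ε θ ≤ p θ' - θ' * ε θ') :
    0 ≤ (ε θ - ε θ') * (θ' - θ) := by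
  nlinarith

theorem antitoneOn_of_incentiveCompatible {s : Set ℝ} {p ε : ℝ → ℝ}
    (hIC : ∀ θ ∈ s, ∀ θ' ∈ s, p θ' - θ * ε θ' ≤ p θ - θ * ε θ) : AntitoneOn ε s := by
  intro x hx y hy hxy
  rcases hxy.eq_or_lt with rfl | hlt
  · exact le_rfl
  · have key := sub_mul_sub_nonneg_of_incentiveCompatible (hIC x hx y hy) (hIC y hy x hx)
    exact sub_nonneg.mp (nonneg_of_mul_nonneg_left key (sub_pos.mpr hlt))

theorem deriv_eq_mul_deriv_of_isLocalMax {p ε : ℝ → ℝ} {θ : ℝ}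
    (hp : DifferentiableAt ℝ p θ) (hε : DifferentiableAt ℝ ε θ)
    (hmax : IsLocalMax (fun x => p x - θ * ε x) θ) : deriv p θ = θ * deriv ε θ := by
  have hcrit := hmax.hasDerivAt_eq_zero (hp.hasDerivAt.sub (hε.hasDerivAt.const_mul θ))
  linarith

theorem continuous_IC_necessity_general
    (a b : ℝ) (ε p : ℝ → ℝ)
    (hεdiff : Differentiable ℝ ε) (hpdiff : Differentiable ℝ p)
    (hIC : ∀ θ ∈ Set.Icc a b, ∀ θ' ∈ Set.Icc a b,
      p θ' - θ * ε θ' ≤ p θ - θ * ε θ) :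
    AntitoneOn ε (Set.Icc a b) ∧
    ∀ θ ∈ Set.Ioo a b, deriv p θ = θ * deriv ε θ := by
  refine ⟨antitoneOn_of_incentiveCompatible hIC, fun θ hθ => ?_⟩
  have hmax : IsLocalMax (fun x => p x - θ * ε x) θ := by
    filter_upwards [Ioo_mem_nhds hθ.1 hθ.2] with x hx
    exact hIC θ (Ioo_subset_Icc_self hθ) x (Ioo_subset_Icc_self hx)
  exact deriv_eq_mul_deriv_of_isLocalMax (hpdiff θ) (hεdiff θ) hmax

/-- Continuous-type IC necessity: if global incentive compatibility holds on
    [θ̲, θ̄] with ε and p differentiable, then ε is non-increasing on the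
    interval and p'(θ) = θ·ε'(θ) at every interior point. -/
theorem continuous_IC_necessity
    (a b : ℝ) (hab : a ≤ b) (ε p : ℝ → ℝ)
    (hεdiff : Differentiable ℝ ε) (hpdiff : Differentiable ℝ p)
    (hIC : ∀ θ ∈ Set.Icc a b, ∀ θ' ∈ Set.Icc a b,
      p θ' - θ * ε θ' ≤ p θ - θ * ε θ) :
    AntitoneOn ε (Set.Icc a b) ∧
    ∀ θ ∈ Set.Ioo a b, deriv p θ = θ * deriv ε θ :=
  continuous_IC_necessity_general a b ε p hεdiff hpdiff hIC
end

section
/- In the discrete incomplete-information optimal contract, type-i's equilibrium utility is u_i* = p_i* − θ_i ε_i* = G·∑_{j=i+1}^k (θ_j − θ_{j−1}) H_j^{−1/3} λ_j^{1/3} (empty sum for i = k), which is nonnegative and non-increasing in i. -/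
/-!
Subtracting `θ i * ε i` from the price leaves the information-rent tail
`∑_{j > i} (θ j - θ (j - 1)) * ε j`, whose terms are nonnegative because `θ` is monotone and
`H j ≥ 0`; a tail sum of nonnegative terms shrinks as `i` grows and is empty at `i = k`.
-/

open Finset

lemma sub_pred_nonneg_of_monotoneOn {θ : ℕ → ℝ} {k j : ℕ} (hθ : MonotoneOn θ (Set.Icc 1 k))
    (hj : j ∈ Icc 2 k) : 0 ≤ θ j - θ (j - 1) := by
  obtain ⟨h2j, hjk⟩ := mem_Icc.mp hj
  exact sub_nonneg.mpr (hθ ⟨by omega, by omega⟩ ⟨by omega, hjk⟩ (by omega))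

lemma mul_add_sub_pred_mul_sum_nonneg {lam θ : ℕ → ℝ} {k i : ℕ}
    (hlam : ∀ j ∈ Icc 1 k, 0 ≤ lam j) (hθ1 : 0 ≤ θ 1) (hθ : MonotoneOn θ (Set.Icc 1 k))
    (hi : i ∈ Icc 1 k) :
    0 ≤ lam i * θ i + (θ i - θ (i - 1)) * ∑ j ∈ Icc 1 (i - 1), lam j := by
  obtain ⟨h1i, hik⟩ := mem_Icc.mp hi
  have hθi : 0 ≤ θ i := hθ1.trans (hθ ⟨le_rfl, by omega⟩ ⟨h1i, hik⟩ h1i)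
  have hrent : 0 ≤ (θ i - θ (i - 1)) * ∑ j ∈ Icc 1 (i - 1), lam j := by
    rcases h1i.eq_or_lt with rfl | h2i
    · simp
    · exact mul_nonneg (sub_pred_nonneg_of_monotoneOn hθ (mem_Icc.mpr ⟨h2i, hik⟩))
        (sum_nonneg fun j hj => hlam j (mem_Icc.mpr ⟨(mem_Icc.mp hj).1, by
          have := (mem_Icc.mp hj).2; omega⟩))
  exact add_nonneg (mul_nonneg (hlam i hi) hθi) hrent

lemma sum_Icc_succ_antitone {M : Type*} [AddCommMonoid M] [PartialOrder M]
    [IsOrderedAddMonoid M] {w : ℕ → M} {k i j : ℕ} (hw : ∀ l ∈ Icc (i + 1) k, 0 ≤ w l)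
    (hij : i ≤ j) : ∑ l ∈ Icc (j + 1) k, w l ≤ ∑ l ∈ Icc (i + 1) k, w l :=
  sum_le_sum_of_subset_of_nonneg (Icc_subset_Icc_left (by omega)) fun l hl _ => hw l hl

theorem incomplete_info_equilibrium_utilities_general
    (k : ℕ) (lam θ : ℕ → ℝ)
    (hlam : ∀ i ∈ Finset.Icc 1 k, 0 < lam i)
    (hθ1 : 0 < θ 1)
    (hθmono : ∀ i j, 1 ≤ i → i ≤ j → j ≤ k → θ i ≤ θ j)
    (B : ℝ) (hB : 0 < B)
    (H : ℕ → ℝ)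
    (hH : ∀ i ∈ Finset.Icc 1 k,
      H i = lam i * θ i + (θ i - θ (i - 1)) * ∑ j ∈ Finset.Icc 1 (i - 1), lam j) :
    let G : ℝ := B / ∑ j ∈ Finset.Icc 1 k, (H j) ^ ((2 : ℝ) / 3) * (lam j) ^ ((1 : ℝ) / 3)
    let εstar : ℕ → ℝ := fun i => G * (H i) ^ (-(1 : ℝ) / 3) * (lam i) ^ ((1 : ℝ) / 3)
    let pstar : ℕ → ℝ := fun i =>
      θ i * εstar i + ∑ j ∈ Finset.Icc (i + 1) k, (θ j - θ (j - 1)) * εstar j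
    let u : ℕ → ℝ := fun i =>
      G * ∑ j ∈ Finset.Icc (i + 1) k,
        (θ j - θ (j - 1)) * (H j) ^ (-(1 : ℝ) / 3) * (lam j) ^ ((1 : ℝ) / 3)
    (∀ i ∈ Finset.Icc 1 k, pstar i - θ i * εstar i = u i) ∧
    (∀ i ∈ Finset.Icc 1 k, 0 ≤ u i) ∧
    (∀ i ∈ Finset.Icc 1 k, ∀ j ∈ Finset.Icc 1 k, i ≤ j → u j ≤ u i) ∧
    u k = 0 := by
  intro G εstar pstar u
  have hlam' : ∀ j ∈ Icc 1 k, 0 ≤ lam j := fun j hj => (hlam j hj).le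
  have hθ : MonotoneOn θ (Set.Icc 1 k) := fun i hi j hj hij => hθmono i j hi.1 hij hj.2
  have hHnn : ∀ j ∈ Icc 1 k, 0 ≤ H j := fun j hj =>
    hH j hj ▸ mul_add_sub_pred_mul_sum_nonneg hlam' hθ1.le hθ hj
  have hG : 0 ≤ G := div_nonneg hB.le <| sum_nonneg fun j hj =>
    mul_nonneg (Real.rpow_nonneg (hHnn j hj) _) (Real.rpow_nonneg (hlam' j hj) _)
  have hanti : ∀ i ∈ Icc 1 k, ∀ j, i ≤ j → u j ≤ u i := by
    intro i hi j hij
    refine mul_le_mul_of_nonneg_left (sum_Icc_succ_antitone (fun l hl => ?_) hij) hG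
    obtain ⟨hil, hlk⟩ := mem_Icc.mp hl
    have hl2 : l ∈ Icc 2 k := mem_Icc.mpr ⟨by grind, hlk⟩
    have hl1 : l ∈ Icc 1 k := mem_Icc.mpr ⟨by omega, hlk⟩
    exact mul_nonneg (mul_nonneg (sub_pred_nonneg_of_monotoneOn hθ hl2)
      (Real.rpow_nonneg (hHnn l hl1) _)) (Real.rpow_nonneg (hlam' l hl1) _)
  have hu_k : u k = 0 := by simp [u]
  refine ⟨fun i _ => ?_, fun i hi => hu_k ▸ hanti i hi k (mem_Icc.mp hi).2,
    fun i hi j _ hij => hanti i hi j hij, hu_k⟩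
  simp only [pstar, εstar, u, add_sub_cancel_left, mul_sum]
  exact sum_congr rfl fun j _ => by ring

/-- Equilibrium utilities in the discrete incomplete-information optimal
    contract: u_i* = p_i* − θ_i ε_i* = G·∑_{j=i+1}^k (θ_j − θ_{j−1})
    H_j^{−1/3} λ_j^{1/3}, which is nonnegative, non-increasing in i, and zero
    for the highest type. -/
theorem incomplete_info_equilibrium_utilities
    (k : ℕ) (hk : 1 ≤ k) (lam θ : ℕ → ℝ)
    (hlam : ∀ i ∈ Finset.Icc 1 k, 0 < lam i)
    (hθ1 : 0 < θ 1)
    (hθmono : ∀ i j, 1 ≤ i → i ≤ j → j ≤ k → θ i ≤ θ j)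
    (B : ℝ) (hB : 0 < B)
    (H : ℕ → ℝ)
    (hH : ∀ i ∈ Finset.Icc 1 k,
      H i = lam i * θ i + (θ i - θ (i - 1)) * ∑ j ∈ Finset.Icc 1 (i - 1), lam j) :
    let G : ℝ := B / ∑ j ∈ Finset.Icc 1 k, (H j) ^ ((2 : ℝ) / 3) * (lam j) ^ ((1 : ℝ) / 3)
    let εstar : ℕ → ℝ := fun i => G * (H i) ^ (-(1 : ℝ) / 3) * (lam i) ^ ((1 : ℝ) / 3)
    let pstar : ℕ → ℝ := fun i =>
      θ i * εstar i + ∑ j ∈ Finset.Icc (i + 1) k, (θ j - θ (j - 1)) * εstar j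
    let u : ℕ → ℝ := fun i =>
      G * ∑ j ∈ Finset.Icc (i + 1) k,
        (θ j - θ (j - 1)) * (H j) ^ (-(1 : ℝ) / 3) * (lam j) ^ ((1 : ℝ) / 3)
    (∀ i ∈ Finset.Icc 1 k, pstar i - θ i * εstar i = u i) ∧
    (∀ i ∈ Finset.Icc 1 k, 0 ≤ u i) ∧
    (∀ i ∈ Finset.Icc 1 k, ∀ j ∈ Finset.Icc 1 k, i ≤ j → u j ≤ u i) ∧
    u k = 0 :=
  incomplete_info_equilibrium_utilities_general k lam θ hlam hθ1 hθmono B hB H hH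
end
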